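/- arXiv:2005.01664 — 2 statements merged into one kernel-verified Lean document; each statement's English description precedes it below -/
import Mathlib

section
/- For m ≥ 1 odd and n ≥ 4, the semidirect product C_m ⋊_{(a,b)} Q_{2^n} (where x acts on C_m by u ↦ u^a and y acts by u ↦ u^b, with a² ≡ b² ≡ 1 mod m) is isomorphic to the quaternion group Q_{2^n m} if and only if (a, b) ≡ (1, -1) (mod m). -/
/-!
In `Q_{2^n m}` every element of order other than 4 lies in the cyclic subgroup of the `a i`,
which is abelian and inverted by every `xa i`. Since `|⟨x, y⟩| ≤ 2 · ord x`, the element `x` has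
order at least `8`, and `u` has odd order, so an isomorphism sends `x` and `u` into that cyclic
subgroup and `y` outside it; hence `x` centralises `u` and `y` inverts it, i.e. `a ≡ 1`, `b ≡ -1`.
Conversely, if `x` centralises and `y` inverts `u`, then `g = u x` and `y` satisfy the defining
relations `g^{2k} = 1`, `y^2 = g^k`, `y g y⁻¹ = g⁻¹` of `Q_{4k}` with `k = 2^{n-2} m`, and `g`
generates `u` and `x` because their orders are coprime; the induced surjection
`Q_{4k} → G` is a bijection as both groups have order `4k`.
-/

open Subgroup Pointwise

section GroupFacts

variable {G : Type*} [Group G]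

theorem zpow_eq_self_iff {u : G} {a : ℤ} : u ^ a = u ↔ (a : ZMod (orderOf u)) = 1 := by
  rw [← Int.cast_one, ZMod.intCast_eq_intCast_iff, ← zpow_eq_zpow_iff_modEq, zpow_one]

theorem zpow_eq_inv_iff {u : G} {a : ℤ} : u ^ a = u⁻¹ ↔ (a : ZMod (orderOf u)) = -1 := by
  rw [← Int.cast_one, ← Int.cast_neg, ZMod.intCast_eq_intCast_iff, ← zpow_eq_zpow_iff_modEq,
    zpow_neg, zpow_one]

theorem pow_four_eq_one_of_conj_eq_inv {x y : G} {k : ℕ} (hxy : y * x * y⁻¹ = x⁻¹)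
    (hk : x ^ k = y ^ 2) : y ^ 4 = 1 := by
  have hy2 : y ^ 2 = (y ^ 2)⁻¹ := by
    calc y ^ 2 = y * y ^ 2 * y⁻¹ := by group
      _ = (y ^ 2)⁻¹ := by rw [← hk, ← conj_pow, hxy, inv_pow]
  calc y ^ 4 = y ^ 2 * y ^ 2 := by group
    _ = 1 := by nth_rewrite 1 [hy2]; exact inv_mul_cancel _

theorem Commute.mem_zpowers_mul_left_of_coprime {u x : G} (h : Commute u x)
    (hco : (orderOf u).Coprime (orderOf x)) : u ∈ zpowers (u * x) := by
  obtain ⟨k, hk⟩ := exists_pow_eq_self_of_coprime hco.symm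
  have hpow : (u * x) ^ orderOf x = u ^ orderOf x := by
    rw [h.mul_pow, pow_orderOf_eq_one, mul_one]
  convert npow_mem_zpowers (u * x) (orderOf x * k)
  rw [pow_mul, hpow, hk]

theorem Commute.mem_zpowers_mul_right_of_coprime {u x : G} (h : Commute u x)
    (hco : (orderOf u).Coprime (orderOf x)) : x ∈ zpowers (u * x) := by
  rw [h.eq]
  exact h.symm.mem_zpowers_mul_left_of_coprime hco.symm

theorem zpowers_le_normalizer_of_conj_eq_inv {x y : G} (hxy : y * x * y⁻¹ = x⁻¹) :
    zpowers y ≤ normalizer (zpowers x : Set G) := by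
  rw [zpowers_le, mem_normalizer_iff_map_conj_eq, MonoidHom.map_zpowers]
  simp [hxy]

theorem natCard_closure_pair_le [Finite G] {x y : G} (hxy : y * x * y⁻¹ = x⁻¹)
    (hy : y ^ 2 ∈ zpowers x) : Nat.card (closure ({x, y} : Set G)) ≤ 2 * orderOf x := by
  have hpowers : (zpowers y : Set G) ⊆ (zpowers x : Set G) * ({1, y} : Set G) := by
    rintro _ ⟨k, rfl⟩
    have hk : y ^ k = (y ^ 2) ^ (k / 2) * y ^ (k % 2) := by
      rw [← zpow_natCast, ← zpow_mul, ← zpow_add, Nat.cast_ofNat, Int.mul_ediv_add_emod]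
    rcases Int.emod_two_eq_zero_or_one k with h | h <;> rw [h] at hk
    · exact ⟨_, zpow_mem hy _, 1, by simp, by simpa using hk.symm⟩
    · exact ⟨_, zpow_mem hy _, y, by simp, by simpa using hk.symm⟩
  have hcover : (closure ({x, y} : Set G) : Set G) ⊆ (zpowers x : Set G) * ({1, y} : Set G) := by
    rw [Set.insert_eq, Subgroup.closure_union, ← zpowers_eq_closure, ← zpowers_eq_closure,
      coe_mul_of_right_le_normalizer_left _ _ (zpowers_le_normalizer_of_conj_eq_inv hxy)]
    calc (zpowers x : Set G) * zpowers y ⊆ zpowers x * (zpowers x * ({1, y} : Set G)) :=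
          Set.mul_subset_mul_left hpowers
      _ = zpowers x * ({1, y} : Set G) := by rw [← mul_assoc, coe_mul_coe]
  calc Nat.card (closure ({x, y} : Set G)) ≤ Nat.card ((zpowers x : Set G) * ({1, y} : Set G)) :=
        Nat.card_mono (Set.toFinite _) hcover
    _ ≤ Nat.card (zpowers x) * Nat.card ({1, y} : Set G) := Set.natCard_mul_le
    _ ≤ orderOf x * 2 := by
        rw [Nat.card_zpowers, Nat.card_coe_set_eq]
        exact Nat.mul_le_mul_left _ ((Set.ncard_insert_le _ _).trans (by simp))
    _ = 2 * orderOf x := mul_comm _ _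

theorem pow_val_add_of_pow_eq_one {k : ℕ} [NeZero k] {g : G} (hg : g ^ k = 1) (i j : ZMod k) :
    g ^ (i + j).val = g ^ i.val * g ^ j.val := by
  rw [ZMod.val_add, ← pow_eq_pow_mod _ hg, pow_add]

theorem pow_val_neg_of_pow_eq_one {k : ℕ} [NeZero k] {g : G} (hg : g ^ k = 1) (i : ZMod k) :
    g ^ (-i).val = (g ^ i.val)⁻¹ :=
  eq_inv_of_mul_eq_one_left <| by
    rw [← pow_val_add_of_pow_eq_one hg, neg_add_cancel, ZMod.val_zero, pow_zero]

end GroupFacts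

namespace QuaternionGroup

variable {n : ℕ}

theorem exists_eq_a_of_orderOf_ne_four [NeZero n] {q : QuaternionGroup n} (h : orderOf q ≠ 4) :
    ∃ i, q = a i := by
  cases q with
  | a i => exact ⟨i, rfl⟩
  | xa i => exact absurd (orderOf_xa i) h

theorem commute_a_a (i j : ZMod (2 * n)) : Commute (a i) (a j) := by
  simp [Commute, SemiconjBy, add_comm]

theorem xa_mul_a_mul_inv (i j : ZMod (2 * n)) : xa i * a j * (xa i)⁻¹ = (a j)⁻¹ := by
  rw [mul_inv_eq_iff_eq_mul, eq_inv_mul_iff_mul_eq]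
  simp [sub_eq_add_neg]

variable {G : Type*} [Group G] [NeZero n]

def lift (g y : G) (hg : g ^ (2 * n) = 1) (hy : y ^ 2 = g ^ n) (hyg : y * g * y⁻¹ = g⁻¹) :
    QuaternionGroup n →* G where
  toFun
    | a i => g ^ i.val
    | xa i => y * g ^ i.val
  map_one' := by
    show g ^ (0 : ZMod (2 * n)).val = 1
    rw [ZMod.val_zero, pow_zero]
  map_mul' := by
    have hswap : ∀ k : ℕ, y * (g ^ k)⁻¹ = g ^ k * y := fun k => by
      rw [← mul_inv_eq_iff_eq_mul, ← inv_pow, ← conj_pow, ← conj_inv, hyg, inv_inv]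
    have hadd := pow_val_add_of_pow_eq_one hg
    have hneg := pow_val_neg_of_pow_eq_one hg
    rintro (i | i) (j | j)
    · exact hadd i j
    · show y * g ^ (j - i).val = g ^ i.val * (y * g ^ j.val)
      rw [sub_eq_neg_add, hadd, hneg, ← mul_assoc, hswap, mul_assoc]
    · show y * g ^ (i + j).val = y * g ^ i.val * g ^ j.val
      rw [hadd, mul_assoc]
    · show g ^ ((n : ZMod (2 * n)) + j - i).val = y * g ^ i.val * (y * g ^ j.val)
      rw [add_sub_assoc, sub_eq_neg_add, hadd, hadd, hneg, ZMod.val_natCast,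
        ← pow_eq_pow_mod _ hg, ← hy, sq, mul_assoc, ← mul_assoc y (g ^ i.val)⁻¹, hswap]
      simp only [mul_assoc]

theorem range_lift {g y : G} (hg : g ^ (2 * n) = 1) (hy : y ^ 2 = g ^ n)
    (hyg : y * g * y⁻¹ = g⁻¹) : (lift g y hg hy hyg).range = closure {g, y} := by
  have hg_mem : g ∈ closure {g, y} := subset_closure (Set.mem_insert _ _)
  have hy_mem : y ∈ closure {g, y} := subset_closure (Set.mem_insert_of_mem _ rfl)
  apply le_antisymm
  · rintro _ ⟨i | i, rfl⟩
    · exact pow_mem hg_mem _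
    · exact mul_mem hy_mem (pow_mem hg_mem _)
  · rw [closure_le, Set.insert_subset_iff, Set.singleton_subset_iff]
    constructor
    · refine ⟨a 1, ?_⟩
      show g ^ (1 : ZMod (2 * n)).val = g
      rw [ZMod.val_one_eq_one_mod, ← pow_eq_pow_mod _ hg, pow_one]
    · refine ⟨xa 0, ?_⟩
      show y * g ^ (0 : ZMod (2 * n)).val = y
      rw [ZMod.val_zero, pow_zero, mul_one]

theorem nonempty_mulEquiv_of_relations {g y : G} (hcard : Nat.card G = 4 * n)
    (hgen : closure {g, y} = ⊤) (hg : g ^ (2 * n) = 1) (hy : y ^ 2 = g ^ n)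
    (hyg : y * g * y⁻¹ = g⁻¹) : Nonempty (G ≃* QuaternionGroup n) := by
  have hsurj : Function.Surjective (lift g y hg hy hyg) := by
    rw [← MonoidHom.range_eq_top, range_lift, hgen]
  have hbij : Function.Bijective (lift g y hg hy hyg) :=
    hsurj.bijective_of_nat_card_le (by rw [hcard, Nat.card_eq_fintype_card, card])
  exact ⟨(MulEquiv.ofBijective _ hbij).symm⟩

theorem conj_eq_self_and_conj_eq_inv_of_mulEquiv {u x y : G} (φ : G ≃* QuaternionGroup n)
    (hu : Odd (orderOf u)) (hx : 4 < orderOf x) (hxy : y * x * y⁻¹ = x⁻¹) :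
    x * u * x⁻¹ = u ∧ y * u * y⁻¹ = u⁻¹ := by
  obtain ⟨i, hi⟩ := exists_eq_a_of_orderOf_ne_four (q := φ x) (by rw [φ.orderOf_eq]; omega)
  obtain ⟨j, hj⟩ := exists_eq_a_of_orderOf_ne_four (q := φ u) <| by
    rw [φ.orderOf_eq]
    rintro h
    rw [h] at hu
    exact absurd hu (by decide)
  obtain ⟨l, hl⟩ : ∃ l, φ y = xa l := by
    cases h : φ y with
    | xa l => exact ⟨l, rfl⟩
    | a l =>
      have hinv : x⁻¹ = x := φ.injective <| by
        rw [← hxy, map_mul, map_mul, map_inv, h, hi, (commute_a_a l i).mul_inv_cancel]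
      have := orderOf_le_of_pow_eq_one (x := x) two_pos (by rw [sq, ← inv_eq_iff_mul_eq_one, hinv])
      omega
  constructor <;> apply φ.injective
  · rw [map_mul, map_mul, map_inv, hi, hj, (commute_a_a i j).mul_inv_cancel]
  · rw [map_mul, map_mul, map_inv, map_inv, hl, hj, xa_mul_a_mul_inv]

end QuaternionGroup

theorem nonempty_mulEquiv_quaternionGroup_of_conj {G : Type*} [Group G] {k : ℕ} [NeZero k]
    {u x y : G} (hu : Odd (orderOf u)) (hk : (orderOf u).Coprime k) (hxk : x ^ k = y ^ 2)
    (hyx : y * x * y⁻¹ = x⁻¹) (hcard : Nat.card G = 4 * (k * orderOf u))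
    (hgen : closure {u, x, y} = ⊤) (hxu : x * u * x⁻¹ = u) (hyu : y * u * y⁻¹ = u⁻¹) :
    Nonempty (G ≃* QuaternionGroup (k * orderOf u)) := by
  have : NeZero (k * orderOf u) := ⟨mul_ne_zero (NeZero.ne k) hu.pos.ne'⟩
  have hcomm : Commute u x := (mul_inv_eq_iff_eq_mul.mp hxu).symm
  have hy4 : y ^ 4 = 1 := pow_four_eq_one_of_conj_eq_inv hyx hxk
  have hco : (orderOf u).Coprime (orderOf x) :=
    (hk.mul_right (Nat.coprime_two_right.2 hu)).coprime_dvd_right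
      (orderOf_dvd_of_pow_eq_one (by rw [pow_mul, hxk, ← pow_mul, hy4]))
  have hy2 : (y ^ 2) ^ orderOf u = y ^ 2 := by
    obtain ⟨c, hc⟩ := hu
    rw [hc, ← pow_mul, show 2 * (2 * c + 1) = 4 * c + 2 by ring, pow_add, pow_mul, hy4, one_pow,
      one_mul]
  have hgk : (u * x) ^ (k * orderOf u) = y ^ 2 := by
    rw [hcomm.mul_pow, mul_comm k, pow_mul, pow_orderOf_eq_one, one_pow, one_mul, pow_mul', hxk,
      hy2]
  have hgen' : closure {u * x, y} = ⊤ := by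
    have hle : zpowers (u * x) ≤ closure {u * x, y} :=
      zpowers_le.2 (subset_closure (Set.mem_insert _ _))
    rw [eq_top_iff, ← hgen, closure_le, Set.insert_subset_iff, Set.insert_subset_iff,
      Set.singleton_subset_iff]
    exact ⟨hle (hcomm.mem_zpowers_mul_left_of_coprime hco),
      hle (hcomm.mem_zpowers_mul_right_of_coprime hco),
      subset_closure (Set.mem_insert_of_mem _ rfl)⟩
  refine QuaternionGroup.nonempty_mulEquiv_of_relations hcard hgen' ?_ hgk.symm ?_
  · rw [pow_mul', hgk, ← pow_mul, hy4]
  · rw [show y * (u * x) * y⁻¹ = (y * u * y⁻¹) * (y * x * y⁻¹) by group, hyu, hyx,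
      ← mul_inv_rev, hcomm.eq]

theorem stmt3_general (G : Type*) [Group G] (m n : ℕ) (hm : Odd m)
    (hn : 4 ≤ n) (a b : ℤ)
    (u x y : G) (hu : orderOf u = m)
    (hxy1 : x ^ (2 ^ (n - 2)) = y ^ 2) (hxy2 : y * x * y⁻¹ = x⁻¹)
    (hQ : Nat.card (Subgroup.closure {x, y}) = 2 ^ n)
    (hx : x * u * x⁻¹ = u ^ a) (hy : y * u * y⁻¹ = u ^ b)
    (hgen : Subgroup.closure {u, x, y} = ⊤)
    (hcard : Nat.card G = 2 ^ n * m) :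
    Nonempty (G ≃* QuaternionGroup (2 ^ (n - 2) * m)) ↔
      ((a : ZMod m) = 1 ∧ (b : ZMod m) = -1) := by
  subst hu
  have hx4 : 4 < orderOf x := by
    have : Finite G := Nat.finite_of_card_ne_zero (by rw [hcard]; have := hm.pos; positivity)
    have hle := hQ ▸ natCard_closure_pair_le hxy2 (hxy1 ▸ npow_mem_zpowers x _)
    have : 2 ^ 4 ≤ 2 ^ n := Nat.pow_le_pow_right two_pos hn
    omega
  have : NeZero (2 ^ (n - 2) * orderOf u) := ⟨by have := hm.pos; positivity⟩
  rw [← zpow_eq_self_iff, ← zpow_eq_inv_iff, ← hx, ← hy]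
  constructor
  · rintro ⟨φ⟩
    exact QuaternionGroup.conj_eq_self_and_conj_eq_inv_of_mulEquiv φ hm hx4 hxy2
  · rintro ⟨hxu, hyu⟩
    refine nonempty_mulEquiv_quaternionGroup_of_conj hm ((Nat.coprime_two_right.2 hm).pow_right _)
      hxy1 hxy2 ?_ hgen hxu hyu
    rw [hcard, ← pow_sub_mul_pow 2 (by omega : 2 ≤ n)]
    ring

/-- For `m ≥ 1` odd and `n ≥ 4`, the semidirect product `C_m ⋊_{(a,b)} Q_{2^n}`
(where `x` acts on a generator `u` of `C_m` by `u ↦ u^a` and `y` by `u ↦ u^b`,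
with `a² ≡ b² ≡ 1 (mod m)`) is isomorphic to the generalised quaternion group
`Q_{2^n m}` iff `(a, b) ≡ (1, -1) (mod m)`. -/
theorem stmt3 (G : Type*) [Group G] (m n : ℕ) (hm : Odd m) (hm1 : 1 ≤ m)
    (hn : 4 ≤ n) (a b : ℤ)
    (ha : ((a : ZMod m)) ^ 2 = 1) (hb : ((b : ZMod m)) ^ 2 = 1)
    (u x y : G) (hu : orderOf u = m)
    (hxy1 : x ^ (2 ^ (n - 2)) = y ^ 2) (hxy2 : y * x * y⁻¹ = x⁻¹)
    (hQ : Nat.card (Subgroup.closure {x, y}) = 2 ^ n)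
    (hx : x * u * x⁻¹ = u ^ a) (hy : y * u * y⁻¹ = u ^ b)
    (hgen : Subgroup.closure {u, x, y} = ⊤)
    (hcard : Nat.card G = 2 ^ n * m) :
    Nonempty (G ≃* QuaternionGroup (2 ^ (n - 2) * m)) ↔
      ((a : ZMod m) = 1 ∧ (b : ZMod m) = -1) :=
  stmt3_general G m n hm hn a b u x y hu hxy1 hxy2 hQ hx hy hgen hcard
end

section
/- Let G be a finite group with periodic cohomology admitting surjections onto generalised quaternion groups Q_{4a} and Q_{4b} with a, b > 1 odd, arising as quotients of a metacyclic group C_m ⋊_{(r)} C_{4n} structure (m odd). Then G also surjects onto Q_{4d} where d = lcm(a, b), and consequently G has at most one maximal binary polyhedral quotient up to equivalence of quotients. -/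
/-!
Let `φ : G → ℍˣ` have non-cyclic image and put `x = φ u`, `y = φ v`. Then `x` has odd order and
does not commute with `y`, so `x` is not real and its centraliser in `ℍ` is `ℝ + ℝ x`. The
conjugate `x ^ r = y x y⁻¹` commutes with `x` and has its real part and norm, hence equals `x` or
`x̄ = x⁻¹`; the first is excluded, so `x ^ r = x⁻¹`. Then `y ^ 2` commutes with `x` and with `y`,
so it is real, and as `y ≠ ±1` it is `-1`. Writing elements of `G` as `u ^ i v ^ j` shows that
`ker φ = ⟨u ^ c, v ^ 4⟩` with `c = ord x`, `c ∣ m`, `c ∣ r + 1`. Likewise a surjection onto `Q_{4q}`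
forces `q ∣ m` and `q ∣ r + 1`.

Conversely, `|G| = 4mn` makes `⟨u, v | u ^ m, v ^ {4n}, v u v⁻¹ = u ^ r⟩` a presentation of `G`.
So every odd `d` dividing `m` and `r + 1` gives a surjection onto `Q_{4d}`, and (for `d ≠ 1`) a
binary polyhedral quotient `u ↦ e ^ {2πi/d}`, `v ↦ j` in `ℍˣ` with kernel `⟨u ^ d, v ^ 4⟩`. For
`d = lcm(a, b)` this is the first claim; for `d = lcm(c₁, c₂)` the kernel lies in both maximal
kernels, which are therefore equal to it.
-/

open scoped Quaternion

/-- A finite group has periodic cohomology iff every abelian subgroup is cyclic. -/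
def HasPeriodicCohomology (G : Type*) [Group G] : Prop :=
  ∀ H : Subgroup G, (∀ x y : H, x * y = y * x) → IsCyclic H

/-- A binary polyhedral group is a finite non-cyclic subgroup of the unit
quaternions. -/
def IsBinaryPolyhedral (H : Type*) [Group H] : Prop :=
  ∃ S : Subgroup (Quaternion ℝ)ˣ, Finite S ∧ ¬ IsCyclic S ∧ Nonempty (H ≃* S)

/-- A surjection `f` onto a binary polyhedral group is a *maximal* binary
polyhedral quotient if it factors through no other binary polyhedral quotient,
i.e. every binary polyhedral quotient whose kernel is contained in `ker f` has
kernel equal to `ker f`. -/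
def IsMaximalBPQuotient {G : Type} [Group G] {H : Type} [Group H]
    (f : G →* H) : Prop :=
  ∀ (H' : Type) [Group H'], IsBinaryPolyhedral H' →
    ∀ g' : G →* H', Function.Surjective g' → g'.ker ≤ f.ker → g'.ker = f.ker

section Metacyclic

variable {H : Type*} [Group H] {p q : H} {R : ℕ}

theorem pow_mul_pow_eq_of_conj_eq_pow (hpq : q * p * q⁻¹ = p ^ R) (j k : ℕ) :
    q ^ j * p ^ k = p ^ (k * R ^ j) * q ^ j := by
  have hq (k : ℕ) : q * p ^ k = p ^ (k * R) * q := by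
    rw [← mul_inv_eq_iff_eq_mul, ← conj_pow, hpq, ← pow_mul, mul_comm]
  induction j with
  | zero => simp
  | succ j ih =>
    calc q ^ (j + 1) * p ^ k = q * (q ^ j * p ^ k) := by rw [pow_succ', mul_assoc]
      _ = p ^ (k * R ^ (j + 1)) * q ^ (j + 1) := by
        rw [ih, ← mul_assoc, hq, pow_succ' q j, pow_succ, mul_assoc, Nat.mul_assoc]

theorem exists_eq_pow_mul_pow (hp : IsOfFinOrder p) (hq : IsOfFinOrder q)
    (hpq : q * p * q⁻¹ = p ^ R) (hgen : Subgroup.closure {p, q} = ⊤) (w : H) :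
    ∃ i j : ℕ, w = p ^ i * q ^ j := by
  have hw : w ∈ (Subgroup.closure {p, q}).toSubmonoid := hgen ▸ Subgroup.mem_top w
  rw [Subgroup.closure_toSubmonoid_of_isOfFinOrder (by simp [hp, hq])] at hw
  induction hw using Submonoid.closure_induction with
  | mem x hx =>
    rcases hx with rfl | rfl
    · exact ⟨1, 0, by simp⟩
    · exact ⟨0, 1, by simp⟩
  | one => exact ⟨0, 0, by simp⟩
  | mul x y _ _ hx hy =>
    obtain ⟨i, j, rfl⟩ := hx
    obtain ⟨k, l, rfl⟩ := hy
    refine ⟨i + k * R ^ j, j + l, ?_⟩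
    rw [mul_assoc, ← mul_assoc (q ^ j), pow_mul_pow_eq_of_conj_eq_pow hpq]
    group

theorem surjective_pow_mul_pow {M N : ℕ} [NeZero M] [NeZero N] (hp : p ^ M = 1) (hq : q ^ N = 1)
    (hpq : q * p * q⁻¹ = p ^ R) (hgen : Subgroup.closure {p, q} = ⊤) :
    Function.Surjective fun ij : Fin M × Fin N ↦ p ^ (ij.1 : ℕ) * q ^ (ij.2 : ℕ) := by
  intro w
  obtain ⟨i, j, rfl⟩ := exists_eq_pow_mul_pow
    (isOfFinOrder_iff_pow_eq_one.mpr ⟨M, NeZero.pos M, hp⟩)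
    (isOfFinOrder_iff_pow_eq_one.mpr ⟨N, NeZero.pos N, hq⟩) hpq hgen w
  exact ⟨(Fin.ofNat M i, Fin.ofNat N j), by simp [← pow_eq_pow_mod _ hp, ← pow_eq_pow_mod _ hq]⟩

theorem card_le_mul_of_conj_eq_pow {M N : ℕ} [NeZero M] [NeZero N] (hp : p ^ M = 1) (hq : q ^ N = 1)
    (hpq : q * p * q⁻¹ = p ^ R) (hgen : Subgroup.closure {p, q} = ⊤) :
    Nat.card H ≤ M * N := by
  simpa using Nat.card_le_card_of_surjective _ (surjective_pow_mul_pow hp hq hpq hgen)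

/-- The relators of `⟨x, y | x ^ M, y ^ N, y x y⁻¹ = x ^ R⟩`, with `x = of true`, `y = of false`. -/
def metacyclicRels (M N R : ℕ) : Set (FreeGroup Bool) :=
  {.of true ^ M, .of false ^ N, .of false * .of true * (.of false)⁻¹ * (.of true ^ R)⁻¹}

theorem exists_lift_metacyclicRels {M N : ℕ} (hp : p ^ M = 1) (hq : q ^ N = 1)
    (hpq : q * p * q⁻¹ = p ^ R) :
    ∃ φ : PresentedGroup (metacyclicRels M N R) →* H,
      φ (.of true) = p ∧ φ (.of false) = q := by
  have h : ∀ ρ ∈ metacyclicRels M N R, FreeGroup.lift (fun b ↦ bif b then p else q) ρ = 1 := by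
    rintro ρ (rfl | rfl | rfl) <;> simp [hp, hq, hpq]
  exact ⟨PresentedGroup.toGroup h, PresentedGroup.toGroup.of h, PresentedGroup.toGroup.of h⟩

theorem presentedGroup_metacyclicRels_of (M N R : ℕ) :
    let x : PresentedGroup (metacyclicRels M N R) := .of true
    let y : PresentedGroup (metacyclicRels M N R) := .of false
    x ^ M = 1 ∧ y ^ N = 1 ∧ y * x * y⁻¹ = x ^ R ∧ Subgroup.closure {x, y} = ⊤ := by
  refine ⟨PresentedGroup.one_of_mem (by simp [metacyclicRels]),
    PresentedGroup.one_of_mem (by simp [metacyclicRels]),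
    mul_inv_eq_one.mp (PresentedGroup.one_of_mem (by simp [metacyclicRels])), ?_⟩
  rw [← PresentedGroup.closure_range_of]
  congr 1
  ext z
  simp [or_comm]

end Metacyclic

theorem exists_monoidHom_of_card_eq {G H : Type*} [Group G] [Group H] {M N R : ℕ}
    [NeZero M] [NeZero N] {u v : G} (hu : u ^ M = 1) (hv : v ^ N = 1)
    (huv : v * u * v⁻¹ = u ^ R) (hgen : Subgroup.closure {u, v} = ⊤)
    (hcard : Nat.card G = M * N) {p q : H} (hp : p ^ M = 1) (hq : q ^ N = 1)
    (hpq : q * p * q⁻¹ = p ^ R) :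
    ∃ χ : G →* H, χ u = p ∧ χ v = q := by
  obtain ⟨Φ, hΦu, hΦv⟩ := exists_lift_metacyclicRels hu hv huv
  obtain ⟨ψ, hψp, hψq⟩ := exists_lift_metacyclicRels hp hq hpq
  obtain ⟨hx, hy, hxy, hxygen⟩ := presentedGroup_metacyclicRels_of M N R
  have hΦ : Function.Surjective Φ := by
    rw [← MonoidHom.range_eq_top, eq_top_iff, ← hgen, Subgroup.closure_le]
    rintro z (rfl | rfl)
    exacts [⟨_, hΦu⟩, ⟨_, hΦv⟩]
  have hcardP : Nat.card (PresentedGroup (metacyclicRels M N R)) ≤ Nat.card G :=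
    hcard ▸ card_le_mul_of_conj_eq_pow hx hy hxy hxygen
  have := Finite.of_surjective _ (surjective_pow_mul_pow hx hy hxy hxygen)
  let E := MulEquiv.ofBijective Φ ((Nat.bijective_iff_surjective_and_card Φ).mpr
    ⟨hΦ, le_antisymm hcardP (Nat.card_le_card_of_surjective _ hΦ)⟩)
  refine ⟨ψ.comp E.symm.toMonoidHom, ?_, ?_⟩
  · rw [MonoidHom.comp_apply, ← hΦu]
    exact (congrArg ψ (E.symm_apply_apply (.of true))).trans hψp
  · rw [MonoidHom.comp_apply, ← hΦv]
    exact (congrArg ψ (E.symm_apply_apply (.of false))).trans hψq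

theorem MonoidHom.range_eq_closure_pair {G H : Type*} [Group G] [Group H] {u v : G}
    (hgen : Subgroup.closure {u, v} = ⊤) (f : G →* H) :
    f.range = Subgroup.closure {f u, f v} := by
  rw [MonoidHom.range_eq_map, ← hgen, MonoidHom.map_closure, Set.image_pair]

theorem conj_eq_pow_of_conj_eq_inv {H : Type*} [Group H] {x y : H} {R : ℕ}
    (h : y * x * y⁻¹ = x⁻¹) (hR : orderOf x ∣ R + 1) : y * x * y⁻¹ = x ^ R := by
  rw [h, eq_comm, ← mul_eq_one_iff_eq_inv, ← pow_succ, orderOf_dvd_iff_pow_eq_one.mp hR]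

namespace QuaternionGroup

variable {n : ℕ}

theorem inv_a (k : ZMod (2 * n)) : (a k)⁻¹ = a (-k) :=
  inv_eq_of_mul_eq_one_right (by rw [a_mul_a, add_neg_cancel, a_zero])

theorem xa_mul_a_mul_xa_inv (i k : ZMod (2 * n)) : xa i * a k * (xa i)⁻¹ = (a k)⁻¹ := by
  rw [inv_a, mul_inv_eq_iff_eq_mul, xa_mul_a, a_mul_xa, sub_neg_eq_add]

theorem orderOf_a_two : orderOf (a 2 : QuaternionGroup n) = n := by
  rw [show (a 2 : QuaternionGroup n) = a 1 ^ 2 by simp [a_one_pow], orderOf_pow' _ two_ne_zero,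
    orderOf_a_one, Nat.gcd_comm, Nat.gcd_mul_right_right, Nat.mul_div_cancel_left _ two_pos]

theorem a_mem_zpowers_a_one [NeZero n] (i : ZMod (2 * n)) : a i ∈ Subgroup.zpowers (a 1) :=
  ⟨i.val, by dsimp only; rw [zpow_natCast, a_one_pow, ZMod.natCast_zmod_val]⟩

theorem xa_notMem_zpowers_a_one [NeZero n] (i : ZMod (2 * n)) :
    xa i ∉ Subgroup.zpowers (a 1) := by
  rw [← mem_powers_iff_mem_zpowers]
  rintro ⟨k, hk⟩
  simp only [a_one_pow] at hk
  cases hk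

theorem closure_a_two_xa_zero (hn : Odd n) :
    Subgroup.closure {a 2, xa 0} = (⊤ : Subgroup (QuaternionGroup n)) := by
  have : NeZero n := ⟨hn.pos.ne'⟩
  obtain ⟨t, rfl⟩ := hn
  set S := Subgroup.closure {(a 2 : QuaternionGroup (2 * t + 1)), xa 0}
  have hxa : xa 0 ∈ S := Subgroup.subset_closure (by simp)
  -- `a 1 = a 2 ^ (t + 1) * xa 0 ^ 2` since `2 (t + 1) + n = 2 n + 1`
  have ha : a 1 ∈ S := by
    have h2n : ((2 * (2 * t + 1) : ℕ) : ZMod (2 * (2 * t + 1))) = 0 := ZMod.natCast_self _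
    have : a 2 ^ (t + 1) * xa 0 ^ 2 = (a 1 : QuaternionGroup (2 * t + 1)) := by
      rw [xa_sq, show (a 2 : QuaternionGroup (2 * t + 1)) = a 1 ^ 2 by simp [a_one_pow],
        ← pow_mul, a_one_pow, a_mul_a]
      congr 1
      push_cast at h2n ⊢
      linear_combination h2n
    exact this ▸ mul_mem (pow_mem (Subgroup.subset_closure (by simp)) _) (pow_mem hxa 2)
  rw [eq_top_iff]
  rintro (i | i) -
  · exact Subgroup.zpowers_le.mpr ha (a_mem_zpowers_a_one i)
  · rw [show xa i = a (-i) * xa 0 by rw [a_mul_xa, zero_sub, neg_neg]]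
    exact mul_mem (Subgroup.zpowers_le.mpr ha (a_mem_zpowers_a_one _)) hxa

end QuaternionGroup

namespace Quaternion

theorem re_mul_comm {R : Type*} [CommRing R] (a b : ℍ[R]) : (a * b).re = (b * a).re := by
  simp only [re_mul]
  ring

variable {R : Type*} [Field R] [LinearOrder R] [IsStrictOrderedRing R]

theorem exists_eq_coe_add_smul_of_commute {x w : ℍ[R]} (hx : x.im ≠ 0) (h : Commute w x) :
    ∃ α β : R, w = α + β • x := by
  have hs : x.imI ^ 2 + x.imJ ^ 2 + x.imK ^ 2 ≠ 0 := by
    simpa [normSq_def'] using (normSq_eq_zero (a := x.im)).not.mpr hx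
  have hI := congrArg QuaternionAlgebra.imI h.eq
  have hJ := congrArg QuaternionAlgebra.imJ h.eq
  have hK := congrArg QuaternionAlgebra.imK h.eq
  simp only [imI_mul, imJ_mul, imK_mul] at hI hJ hK
  -- `w * x = x * w` says that the cross product of `w.im` and `x.im` vanishes
  set β := (w.imI * x.imI + w.imJ * x.imJ + w.imK * x.imK) / (x.imI ^ 2 + x.imJ ^ 2 + x.imK ^ 2)
  refine ⟨w.re - β * x.re, β, ?_⟩
  ext <;> simp only [re_add, re_coe, re_smul, imI_add, imI_coe, imI_smul, imJ_add, imJ_coe,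
    imJ_smul, imK_add, imK_coe, imK_smul, smul_eq_mul, β] <;> field_simp
  · ring
  · linear_combination (x.imJ * hK - x.imK * hJ) / 2
  · linear_combination (x.imK * hI - x.imI * hK) / 2
  · linear_combination (x.imI * hJ - x.imJ * hI) / 2

theorem eq_or_eq_star_of_commute {x w : ℍ[R]} (hx : x.im ≠ 0) (hn : normSq w = normSq x)
    (hre : w.re = x.re) (h : Commute w x) : w = x ∨ w = star x := by
  have hs : x.imI ^ 2 + x.imJ ^ 2 + x.imK ^ 2 ≠ 0 := by
    simpa [normSq_def'] using (normSq_eq_zero (a := x.im)).not.mpr hx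
  obtain ⟨α, β, rfl⟩ := exists_eq_coe_add_smul_of_commute hx h
  simp only [re_add, re_coe, re_smul, smul_eq_mul] at hre
  simp only [normSq_def', re_add, re_coe, re_smul, imI_add, imI_coe, imI_smul, imJ_add, imJ_coe,
    imJ_smul, imK_add, imK_coe, imK_smul, smul_eq_mul, hre] at hn
  have hβ : (β - 1) * (β + 1) = 0 := by
    refine (mul_eq_zero.mp ?_).resolve_right hs
    linear_combination hn
  rcases mul_eq_zero.mp hβ with hβ | hβ
  · left
    obtain rfl : β = 1 := by linear_combination hβ
    obtain rfl : α = 0 := by linear_combination hre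
    simp
  · right
    obtain rfl : β = -1 := by linear_combination hβ
    obtain rfl : α = 2 * x.re := by linear_combination hre
    rw [star_eq_two_re_sub, neg_smul, one_smul, sub_eq_add_neg]

theorem normSq_eq_one_of_pow_eq_one {x : ℍ[R]} {k : ℕ} (hk : k ≠ 0) (h : x ^ k = 1) :
    normSq x = 1 :=
  (pow_eq_one_iff_of_nonneg normSq_nonneg hk).mp (by rw [← map_pow, h, map_one])

section Units

variable {x y : ℍ[R]ˣ}

theorem im_ne_zero_of_odd_orderOf (hc : Odd (orderOf x)) (hx : x ≠ 1) : (x : ℍ[R]).im ≠ 0 := by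
  intro him
  have hre : (x : ℍ[R]) = ((x : ℍ[R]).re : ℍ[R]) := by
    rw [← re_add_im (x : ℍ[R]), him, add_zero, re_coe]
  have hpow : (x : ℍ[R]).re ^ orderOf x = 1 ^ orderOf x := coe_injective <| by
    rw [coe_pow, ← hre, ← Units.val_pow_eq_pow_val, pow_orderOf_eq_one, one_pow, Units.val_one,
      coe_one]
  exact hx (Units.ext (by rw [hre, hc.strictMono_pow.injective hpow, coe_one, Units.val_one]))

theorem normSq_coe_eq_one_of_isOfFinOrder (hx : IsOfFinOrder x) : normSq (x : ℍ[R]) = 1 :=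
  normSq_eq_one_of_pow_eq_one hx.orderOf_pos.ne'
    (by rw [← Units.val_pow_eq_pow_val, pow_orderOf_eq_one, Units.val_one])

theorem pow_eq_inv_of_conj_eq_pow {r : ℕ} (hc : Odd (orderOf x)) (hconj : y * x * y⁻¹ = x ^ r)
    (hxy : ¬Commute x y) : x ^ r = x⁻¹ := by
  have hx : IsOfFinOrder x := orderOf_pos_iff.mp hc.pos
  have him : (x : ℍ[R]).im ≠ 0 :=
    im_ne_zero_of_odd_orderOf hc (by rintro rfl; exact hxy (Commute.one_left y))
  -- `x ^ r` is a conjugate of `x` of finite order, so it has the same real part and norm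
  have hre : ((x ^ r : ℍ[R]ˣ) : ℍ[R]).re = (x : ℍ[R]).re := by
    rw [← hconj, Units.val_mul, re_mul_comm, Units.val_mul, ← mul_assoc, ← Units.val_mul,
      inv_mul_cancel, Units.val_one, one_mul]
  have hn : normSq ((x ^ r : ℍ[R]ˣ) : ℍ[R]) = normSq (x : ℍ[R]) := by
    rw [normSq_coe_eq_one_of_isOfFinOrder hx, normSq_coe_eq_one_of_isOfFinOrder (hx.pow)]
  rcases eq_or_eq_star_of_commute him hn hre (Commute.self_pow x r).symm.units_val with h | h
  · exact absurd (mul_inv_eq_iff_eq_mul.mp (hconj.trans (Units.ext h))).symm hxy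
  · refine Units.ext ?_
    rw [h, Units.val_inv_eq_inv_val, inv_def, normSq_coe_eq_one_of_isOfFinOrder hx, inv_one,
      one_smul]

theorem sq_eq_neg_one_of_conj_eq_inv (hc : Odd (orderOf x)) (hy : IsOfFinOrder y)
    (hconj : y * x * y⁻¹ = x⁻¹) (hxy : ¬Commute x y) : y ^ 2 = -1 := by
  have him : (x : ℍ[R]).im ≠ 0 :=
    im_ne_zero_of_odd_orderOf hc (by rintro rfl; exact hxy (Commute.one_left y))
  have hy2x : Commute (y ^ 2) x := by
    refine mul_inv_eq_iff_eq_mul.mp ?_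
    calc y ^ 2 * x * (y ^ 2)⁻¹ = (y * (y * x * y⁻¹)⁻¹ * y⁻¹)⁻¹ := by group
      _ = x := by rw [hconj, inv_inv, hconj, inv_inv]
  obtain ⟨α, β, hαβ⟩ := exists_eq_coe_add_smul_of_commute him hy2x.units_val
  -- if `β ≠ 0` then `x = β⁻¹ (y ^ 2 - α)` would commute with `y`
  obtain rfl : β = 0 := by
    by_contra hβ
    refine hxy (Commute.units_of_val ?_)
    have hx : (x : ℍ[R]) = β⁻¹ • ((y ^ 2 : ℍ[R]ˣ) - (α : ℍ[R])) := by
      rw [hαβ, add_sub_cancel_left, smul_smul, inv_mul_cancel₀ hβ, one_smul]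
    rw [hx, Units.val_pow_eq_pow_val]
    exact ((Commute.self_pow _ 2).symm.sub_left (coe_commutes α _)).smul_left β⁻¹
  rw [zero_smul, add_zero] at hαβ
  have hα : α * α = 1 := by
    rw [← pow_two, ← normSq_coe, ← hαβ, Units.val_pow_eq_pow_val, map_pow,
      normSq_coe_eq_one_of_isOfFinOrder hy, one_pow]
  rcases mul_self_eq_one_iff.mp hα with rfl | rfl
  · have hY : (y : ℍ[R]) * y = 1 := by rw [← pow_two, ← Units.val_pow_eq_pow_val, hαβ, coe_one]
    refine absurd (Commute.units_of_val ?_) hxy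
    rcases mul_self_eq_one_iff.mp hY with h | h <;> rw [h]
    exacts [Commute.one_right _, Commute.neg_one_right _]
  · exact Units.ext (by rw [hαβ, Units.val_neg, Units.val_one, coe_neg, coe_one])

end Units

theorem exists_orderOf_eq_of_conj_eq_inv {d : ℕ} (hd : d ≠ 0) :
    ∃ ξ η : ℍ[ℝ]ˣ, orderOf ξ = d ∧ η ^ 4 = 1 ∧ η * ξ * η⁻¹ = ξ⁻¹ := by
  obtain ⟨ζ, hζ⟩ : ∃ ζ : ℂ, IsPrimitiveRoot ζ d := ⟨_, Complex.isPrimitiveRoot_exp d hd⟩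
  have hζ0 : ofComplex ζ ≠ 0 := (map_ne_zero _).mpr (hζ.ne_zero hd)
  let j : ℍ[ℝ] := ⟨0, 0, 1, 0⟩
  have hjj : j * j = -1 := by
    ext <;> simp only [re_mul, imI_mul, imJ_mul, imK_mul] <;> simp [j]
  have hj (z : ℂ) : j * ofComplex z = ofComplex (starRingEnd ℂ z) * j := by
    ext <;> simp only [re_mul, imI_mul, imJ_mul, imK_mul] <;> simp [j]
  have hj0 : j ≠ 0 := fun h ↦ by simp [h] at hjj
  refine ⟨hζ0.isUnit.unit, hj0.isUnit.unit, ?_, ?_, ?_⟩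
  · rw [← orderOf_units, IsUnit.unit_spec]
    exact (orderOf_injective (ofComplex : ℂ →* ℍ[ℝ]) ofComplex.toRingHom.injective ζ).trans
      hζ.eq_orderOf.symm
  · ext1
    rw [Units.val_pow_eq_pow_val, IsUnit.unit_spec, Units.val_one, show 4 = 2 * 2 from rfl,
      pow_mul, sq j, hjj, neg_one_sq]
  · ext1
    rw [Units.val_mul, Units.val_mul, Units.val_inv_eq_inv_val, Units.val_inv_eq_inv_val,
      IsUnit.unit_spec, IsUnit.unit_spec, hj, mul_assoc, mul_inv_cancel₀ hj0, mul_one,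
      ← map_inv₀, Complex.inv_eq_conj (hζ.norm'_eq_one hd)]

end Quaternion

theorem dvd_and_dvd_of_pow_mul_pow_eq_one {K : Type*} [Group K] [HasDistribNeg K] {x y : K}
    (hne : (-1 : K) ≠ 1) (hc : Odd (orderOf x)) (hy : y ^ 2 = -1) (hxy : ¬Commute x y)
    {i j : ℕ} (h : x ^ i * y ^ j = 1) : orderOf x ∣ i ∧ 4 ∣ j := by
  have hy4 : y ^ 4 = 1 := by rw [show 4 = 2 * 2 from rfl, pow_mul, hy, neg_one_sq]
  rw [pow_eq_pow_mod j hy4] at h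
  have hj : j % 4 < 4 := Nat.mod_lt _ (by norm_num)
  interval_cases hjm : j % 4
  · rw [pow_zero, mul_one] at h
    exact ⟨orderOf_dvd_of_pow_eq_one h, Nat.dvd_of_mod_eq_zero hjm⟩
  · rw [pow_one, mul_eq_one_iff_inv_eq] at h
    exact absurd (h ▸ (Commute.self_pow x i).inv_right) hxy
  · rw [hy, mul_neg_one, neg_eq_iff_eq_neg] at h
    have hci : orderOf x ∣ i := by
      refine (Nat.coprime_two_right.mpr hc).dvd_of_dvd_mul_left (orderOf_dvd_of_pow_eq_one ?_)
      rw [pow_mul', h, neg_one_sq]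
    exact absurd (h.symm.trans (orderOf_dvd_iff_pow_eq_one.mp hci)) hne
  · rw [pow_succ', hy, mul_neg_one, mul_neg, neg_eq_iff_eq_neg] at h
    refine absurd ?_ hxy
    rw [eq_inv_mul_of_mul_eq h]
    exact ((Commute.self_pow x i).inv_right.mul_right (Commute.neg_one_right x))

open scoped IsMulCommutative in
theorem isCyclic_subgroup_units_of_isMulCommutative {D : Type*} [DivisionRing D] (S : Subgroup Dˣ)
    [Finite S] [IsMulCommutative S] : IsCyclic S := by
  let A := Subring.closure ((↑) '' (S : Set Dˣ) : Set D)
  have : IsMulCommutative A := Subring.isMulCommutative_closure <| by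
    rintro _ ⟨a, ha, rfl⟩ _ ⟨b, hb, rfl⟩
    exact congrArg Units.val (setLike_mul_comm ha hb)
  let f : S →* A :=
    { toFun s := ⟨s.1, Subring.subset_closure ⟨s, s.2, rfl⟩⟩
      map_one' := rfl
      map_mul' _ _ := rfl }
  exact isCyclic_of_injective_ringHom f fun s t h ↦
    Subtype.ext (Units.ext (congrArg Subtype.val h))

theorem IsBinaryPolyhedral.exists_quaternion_ker_eq {G H : Type*} [Group G] [Group H]
    (hH : IsBinaryPolyhedral H) (g : G →* H) (hg : Function.Surjective g) :
    ∃ φ : G →* ℍ[ℝ]ˣ, φ.ker = g.ker ∧ ¬IsCyclic φ.range := by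
  obtain ⟨S, -, hS, ⟨e⟩⟩ := hH
  refine ⟨S.subtype.comp (e.toMonoidHom.comp g), ?_, ?_⟩
  · rw [MonoidHom.ker_comp_of_injective _ _ S.subtype_injective]
    exact MonoidHom.ker_mulEquiv_comp g e
  · rwa [MonoidHom.range_comp, MonoidHom.range_eq_top.mpr (e.surjective.comp hg),
      ← MonoidHom.range_eq_map, Subgroup.range_subtype]

open QuaternionGroup

section Presentation

variable {G : Type*} [Group G] {M N R : ℕ} {u v : G}

theorem exists_surjective_quaternionGroup [NeZero M] [NeZero N] (hu : u ^ M = 1)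
    (hv : v ^ N = 1) (huv : v * u * v⁻¹ = u ^ R) (hgen : Subgroup.closure {u, v} = ⊤)
    (hcard : Nat.card G = M * N) (hN : 4 ∣ N) {d : ℕ} (hd : Odd d) (hdM : d ∣ M)
    (hdR : d ∣ R + 1) : ∃ g : G →* QuaternionGroup d, Function.Surjective g := by
  have : NeZero d := ⟨hd.pos.ne'⟩
  obtain ⟨g, hgu, hgv⟩ := exists_monoidHom_of_card_eq hu hv huv hgen hcard
    (orderOf_dvd_iff_pow_eq_one.mp (orderOf_a_two (n := d) ▸ hdM))
    (orderOf_dvd_iff_pow_eq_one.mp (orderOf_xa (n := d) 0 ▸ hN))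
    (conj_eq_pow_of_conj_eq_inv (xa_mul_a_mul_xa_inv 0 2) (by rwa [orderOf_a_two]))
  refine ⟨g, MonoidHom.range_eq_top.mp ?_⟩
  rw [g.range_eq_closure_pair hgen, hgu, hgv, closure_a_two_xa_zero hd]

theorem dvd_of_surjective_quaternionGroup (hM : Odd M) (hu : u ^ M = 1)
    (huv : v * u * v⁻¹ = u ^ R) (hgen : Subgroup.closure {u, v} = ⊤) {q : ℕ} [NeZero q]
    (f : G →* QuaternionGroup q) (hf : Function.Surjective f) : q ∣ M ∧ q ∣ R + 1 := by
  have hfgen : Subgroup.closure {f u, f v} = ⊤ := by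
    rw [← f.range_eq_closure_pair hgen, MonoidHom.range_eq_top.mpr hf]
  have hcM : orderOf (f u) ∣ M := orderOf_dvd_of_pow_eq_one (by rw [← map_pow, hu, map_one])
  have hc : Odd (orderOf (f u)) := hM.of_dvd_nat hcM
  obtain ⟨k, hk⟩ : ∃ k, f u = a k := by
    rcases h : f u with k | k
    · exact ⟨k, rfl⟩
    · rw [h, orderOf_xa] at hc
      exact absurd hc (by decide)
  obtain ⟨l, hl⟩ : ∃ l, f v = xa l := by
    rcases h : f v with l | l
    · refine absurd (hfgen ▸ Subgroup.mem_top (xa 0)) fun hmem ↦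
        xa_notMem_zpowers_a_one (0 : ZMod (2 * q)) ?_
      refine (Subgroup.closure_le _).mpr ?_ hmem
      rintro _ (rfl | rfl)
      exacts [hk ▸ a_mem_zpowers_a_one k, h ▸ a_mem_zpowers_a_one l]
    · exact ⟨l, rfl⟩
  have hconj : f v * f u * (f v)⁻¹ = f u ^ R := by
    rw [← map_inv, ← map_mul, ← map_mul, huv, map_pow]
  have hcR : orderOf (f u) ∣ R + 1 := by
    refine orderOf_dvd_of_pow_eq_one ?_
    rw [pow_succ, ← hconj, hk, hl, xa_mul_a_mul_xa_inv, inv_mul_cancel]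
  have : NeZero (orderOf (f u)) := ⟨hc.pos.ne'⟩
  have hq_le : q ≤ orderOf (f u) := by
    have := card_le_mul_of_conj_eq_pow (pow_orderOf_eq_one (f u)) (hl ▸ xa_pow_four l) hconj hfgen
    rw [Nat.card_eq_fintype_card, QuaternionGroup.card] at this
    omega
  have hc_dvd : orderOf (f u) ∣ q := by
    have := orderOf_dvd_natCard (f u)
    rw [Nat.card_eq_fintype_card, QuaternionGroup.card] at this
    exact (Nat.Coprime.pow_right 2 (Nat.coprime_two_right.mpr hc)).dvd_of_dvd_mul_left this
  rw [← le_antisymm (Nat.le_of_dvd (NeZero.pos q) hc_dvd) hq_le]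
  exact ⟨hcM, hcR⟩

theorem not_commute_of_not_isCyclic_range [Finite G] {D : Type*} [DivisionRing D]
    (hgen : Subgroup.closure {u, v} = ⊤) (φ : G →* Dˣ) (hφ : ¬IsCyclic φ.range) :
    ¬Commute (φ u) (φ v) := by
  intro hcomm
  have : Finite φ.range := Finite.of_surjective _ φ.rangeRestrict_surjective
  have : IsMulCommutative φ.range := by
    rw [φ.range_eq_closure_pair hgen]
    refine Subgroup.isMulCommutative_closure ?_
    rintro _ (rfl | rfl) _ (rfl | rfl)
    exacts [rfl, hcomm.eq, hcomm.symm.eq, rfl]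
  exact hφ (isCyclic_subgroup_units_of_isMulCommutative _)

theorem ker_eq_closure_of_not_isCyclic_range [Finite G] {K : Type*} [Field K] [LinearOrder K]
    [IsStrictOrderedRing K] (hM : Odd M) (hu : u ^ M = 1) (huv : v * u * v⁻¹ = u ^ R)
    (hgen : Subgroup.closure {u, v} = ⊤) (φ : G →* ℍ[K]ˣ) (hφ : ¬IsCyclic φ.range) :
    orderOf (φ u) ≠ 1 ∧ orderOf (φ u) ∣ M ∧ orderOf (φ u) ∣ R + 1 ∧
      φ.ker = Subgroup.closure {u ^ orderOf (φ u), v ^ 4} := by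
  have hxy := not_commute_of_not_isCyclic_range hgen φ hφ
  have hcM : orderOf (φ u) ∣ M := orderOf_dvd_of_pow_eq_one (by rw [← map_pow, hu, map_one])
  have hc : Odd (orderOf (φ u)) := hM.of_dvd_nat hcM
  have hconj : φ v * φ u * (φ v)⁻¹ = φ u ^ R := by
    rw [← map_inv, ← map_mul, ← map_mul, huv, map_pow]
  have hinv := Quaternion.pow_eq_inv_of_conj_eq_pow hc hconj hxy
  have hy := Quaternion.sq_eq_neg_one_of_conj_eq_inv hc (φ.isOfFinOrder (isOfFinOrder_of_finite v))
    (hconj.trans hinv) hxy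
  refine ⟨fun h ↦ hxy (orderOf_eq_one_iff.mp h ▸ Commute.one_left _), hcM,
    orderOf_dvd_of_pow_eq_one (by rw [pow_succ, hinv, inv_mul_cancel]), le_antisymm ?_ ?_⟩
  · intro w hw
    obtain ⟨i, j, rfl⟩ :=
      exists_eq_pow_mul_pow (isOfFinOrder_of_finite u) (isOfFinOrder_of_finite v) huv hgen w
    have hne : (-1 : ℍ[K]ˣ) ≠ 1 := fun h ↦
      absurd (congrArg (fun q : ℍ[K]ˣ ↦ (q : ℍ[K]).re) h) (by norm_num)
    obtain ⟨⟨s, rfl⟩, ⟨t, rfl⟩⟩ := dvd_and_dvd_of_pow_mul_pow_eq_one hne hc hy hxy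
      (by simpa using hw)
    rw [pow_mul, pow_mul]
    exact mul_mem (pow_mem (Subgroup.subset_closure (by simp)) s)
      (pow_mem (Subgroup.subset_closure (by simp)) t)
  · rw [Subgroup.closure_le]
    rintro _ (rfl | rfl)
    · simp [pow_orderOf_eq_one]
    · rw [SetLike.mem_coe, MonoidHom.mem_ker, map_pow, show 4 = 2 * 2 from rfl, pow_mul, hy,
        neg_one_sq]

theorem exists_not_isCyclic_range_of_dvd [NeZero M] [NeZero N] (hu : u ^ M = 1) (hv : v ^ N = 1)
    (huv : v * u * v⁻¹ = u ^ R) (hgen : Subgroup.closure {u, v} = ⊤)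
    (hcard : Nat.card G = M * N) (hN : 4 ∣ N) {d : ℕ} (hd : Odd d) (hd1 : d ≠ 1) (hdM : d ∣ M)
    (hdR : d ∣ R + 1) : ∃ χ : G →* ℍ[ℝ]ˣ, orderOf (χ u) = d ∧ ¬IsCyclic χ.range := by
  obtain ⟨ξ, η, hξ, hη, hηξ⟩ := Quaternion.exists_orderOf_eq_of_conj_eq_inv hd.pos.ne'
  obtain ⟨χ, hχu, hχv⟩ := exists_monoidHom_of_card_eq hu hv huv hgen hcard
    (orderOf_dvd_iff_pow_eq_one.mp (hξ ▸ hdM))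
    (orderOf_dvd_iff_pow_eq_one.mp ((orderOf_dvd_of_pow_eq_one hη).trans hN))
    (conj_eq_pow_of_conj_eq_inv hηξ (hξ ▸ hdR))
  refine ⟨χ, hχu ▸ hξ, fun hcyc ↦ hd1 ?_⟩
  have hcomm : η * ξ = ξ * η := setLike_mul_comm (s := χ.range) ⟨v, hχv⟩ ⟨u, hχu⟩
  have hξ2 : ξ ^ 2 = 1 := by
    rw [sq, mul_eq_one_iff_eq_inv, ← hηξ, hcomm, mul_inv_cancel_right]
  rcases (Nat.dvd_prime Nat.prime_two).mp (hξ ▸ orderOf_dvd_of_pow_eq_one hξ2) with h | rfl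
  exacts [h, absurd hd (by decide)]

end Presentation

theorem ker_eq_ker_of_isMaximalBPQuotient {G : Type} [Group G] [Finite G] {M N R : ℕ}
    [NeZero M] [NeZero N] {u v : G} (hM : Odd M) (hu : u ^ M = 1) (hv : v ^ N = 1)
    (huv : v * u * v⁻¹ = u ^ R) (hgen : Subgroup.closure {u, v} = ⊤)
    (hcard : Nat.card G = M * N) (hN : 4 ∣ N)
    {H₁ H₂ : Type} [Group H₁] [Group H₂] (hH₁ : IsBinaryPolyhedral H₁)
    (hH₂ : IsBinaryPolyhedral H₂) {g₁ : G →* H₁} {g₂ : G →* H₂} (hg₁ : Function.Surjective g₁)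
    (hg₂ : Function.Surjective g₂) (hmax₁ : IsMaximalBPQuotient g₁)
    (hmax₂ : IsMaximalBPQuotient g₂) : g₁.ker = g₂.ker := by
  obtain ⟨φ₁, hφ₁, hφ₁c⟩ := hH₁.exists_quaternion_ker_eq g₁ hg₁
  obtain ⟨φ₂, hφ₂, hφ₂c⟩ := hH₂.exists_quaternion_ker_eq g₂ hg₂
  obtain ⟨hc₁, hc₁M, hc₁R, hker₁⟩ := ker_eq_closure_of_not_isCyclic_range hM hu huv hgen φ₁ hφ₁c
  obtain ⟨-, hc₂M, hc₂R, hker₂⟩ := ker_eq_closure_of_not_isCyclic_range hM hu huv hgen φ₂ hφ₂c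
  -- both quotients factor through the one of order `4 lcm(c₁, c₂)`
  set d := Nat.lcm (orderOf (φ₁ u)) (orderOf (φ₂ u))
  have hdM : d ∣ M := Nat.lcm_dvd hc₁M hc₂M
  obtain ⟨χ, hχu, hχ⟩ := exists_not_isCyclic_range_of_dvd hu hv huv hgen hcard hN
    (hM.of_dvd_nat hdM) (fun h ↦ hc₁ (Nat.dvd_one.mp (h ▸ Nat.dvd_lcm_left _ _))) hdM
    (Nat.lcm_dvd hc₁R hc₂R)
  have hkerχ := (ker_eq_closure_of_not_isCyclic_range hM hu huv hgen χ hχ).2.2.2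
  have hH : IsBinaryPolyhedral χ.range :=
    ⟨χ.range, Finite.of_surjective _ χ.rangeRestrict_surjective, hχ, ⟨MulEquiv.refl _⟩⟩
  have hle {c : ℕ} (hc : c ∣ d) : χ.rangeRestrict.ker ≤ Subgroup.closure {u ^ c, v ^ 4} := by
    rw [MonoidHom.ker_rangeRestrict, hkerχ, hχu, Subgroup.closure_le]
    obtain ⟨t, ht⟩ := hc
    rintro _ (rfl | rfl)
    · exact ht ▸ pow_mul u c t ▸ pow_mem (Subgroup.subset_closure (by simp)) t
    · exact Subgroup.subset_closure (by simp)
  rw [← hmax₁ _ hH _ χ.rangeRestrict_surjective (hφ₁ ▸ hker₁ ▸ hle (Nat.dvd_lcm_left _ _)),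
    ← hmax₂ _ hH _ χ.rangeRestrict_surjective (hφ₂ ▸ hker₂ ▸ hle (Nat.dvd_lcm_right _ _))]

theorem stmt19_general (G : Type) [Group G]
    (m n r : ℕ) (hn : 1 ≤ n) (hm : Odd m)
    (u v : G) (hu : orderOf u = m) (hv : orderOf v = 4 * n)
    (hrel : v * u * v⁻¹ = u ^ r)
    (hgen : Subgroup.closure {u, v} = ⊤)
    (hcard : Nat.card G = m * (4 * n))
    (a b : ℕ) (ha : 1 < a) (hb : 1 < b)
    (f₁ : G →* QuaternionGroup a) (hf₁ : Function.Surjective f₁)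
    (f₂ : G →* QuaternionGroup b) (hf₂ : Function.Surjective f₂) :
    (∃ g : G →* QuaternionGroup (Nat.lcm a b), Function.Surjective g) ∧
    (∀ (H₁ : Type) [Group H₁] (H₂ : Type) [Group H₂],
      IsBinaryPolyhedral H₁ → IsBinaryPolyhedral H₂ →
      ∀ (g₁ : G →* H₁) (g₂ : G →* H₂),
        Function.Surjective g₁ → Function.Surjective g₂ →
        IsMaximalBPQuotient g₁ → IsMaximalBPQuotient g₂ →
        g₁.ker = g₂.ker) := by
  have : NeZero m := ⟨hm.pos.ne'⟩
  have : NeZero (4 * n) := ⟨by omega⟩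
  have : NeZero a := ⟨by omega⟩
  have : NeZero b := ⟨by omega⟩
  have : Finite G := Nat.finite_of_card_ne_zero (hcard ▸ NeZero.ne _)
  have hum : u ^ m = 1 := hu ▸ pow_orderOf_eq_one u
  have hvn : v ^ (4 * n) = 1 := hv ▸ pow_orderOf_eq_one v
  refine ⟨?_, fun H₁ _ H₂ _ hH₁ hH₂ g₁ g₂ hg₁ hg₂ hmax₁ hmax₂ ↦
    ker_eq_ker_of_isMaximalBPQuotient hm hum hvn hrel hgen hcard (dvd_mul_right 4 n) hH₁ hH₂ hg₁ hg₂
      hmax₁ hmax₂⟩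
  obtain ⟨ham, haR⟩ := dvd_of_surjective_quaternionGroup hm hum hrel hgen f₁ hf₁
  obtain ⟨hbm, hbR⟩ := dvd_of_surjective_quaternionGroup hm hum hrel hgen f₂ hf₂
  exact exists_surjective_quaternionGroup hum hvn hrel hgen hcard (dvd_mul_right 4 n)
    (hm.of_dvd_nat (Nat.lcm_dvd ham hbm)) (Nat.lcm_dvd ham hbm) (Nat.lcm_dvd haR hbR)

/-- Let `G = C_m ⋊_{(r)} C_{4n}` (m odd) have periodic cohomology and surject
onto `Q_{4a}` and `Q_{4b}` with `a, b > 1` odd.  Then `G` surjects onto `Q_{4d}`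
for `d = lcm(a,b)`, and `G` has at most one maximal binary polyhedral quotient
up to equivalence (equality of kernels). -/
theorem stmt19 (G : Type) [Group G] (hG : HasPeriodicCohomology G)
    (m n r : ℕ) (hn : 1 ≤ n) (hm : Odd m) (hcop : Nat.Coprime m (4 * n))
    (hr : r ^ (4 * n) ≡ 1 [MOD m])
    (u v : G) (hu : orderOf u = m) (hv : orderOf v = 4 * n)
    (hrel : v * u * v⁻¹ = u ^ r)
    (hgen : Subgroup.closure {u, v} = ⊤)
    (hcard : Nat.card G = m * (4 * n))
    (a b : ℕ) (ha : 1 < a) (hb : 1 < b) (hao : Odd a) (hbo : Odd b)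
    (f₁ : G →* QuaternionGroup a) (hf₁ : Function.Surjective f₁)
    (f₂ : G →* QuaternionGroup b) (hf₂ : Function.Surjective f₂) :
    (∃ g : G →* QuaternionGroup (Nat.lcm a b), Function.Surjective g) ∧
    (∀ (H₁ : Type) [Group H₁] (H₂ : Type) [Group H₂],
      IsBinaryPolyhedral H₁ → IsBinaryPolyhedral H₂ →
      ∀ (g₁ : G →* H₁) (g₂ : G →* H₂),
        Function.Surjective g₁ → Function.Surjective g₂ →
        IsMaximalBPQuotient g₁ → IsMaximalBPQuotient g₂ →
        g₁.ker = g₂.ker) :=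
  stmt19_general G m n r hn hm u v hu hv hrel hgen hcard a b ha hb f₁ hf₁ f₂ hf₂
end
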